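/- arXiv:1111.6094 — 2 statements merged into one kernel-verified Lean document; each statement's English description precedes it below -/
import Mathlib

section
/- Let A be a q-positive subset of an SSD space B. Then A is q-representable if and only if P_q(Φ_A^@) ⊆ A. -/
noncomputable section

variable {B : Type*} [AddCommGroup B] [Module ℝ B]

/-- The quadratic form `q(x) = ½⌊x,x⌋` associated to the bilinear form `br`. -/
def qQ (br : B →ₗ[ℝ] B →ₗ[ℝ] ℝ) (x : B) : ℝ := (1 / 2) * br x x

/-- `A` is `q`-positive: nonempty and `q(b - c) ≥ 0` for all `b, c ∈ A`. -/
def IsQPositive (br : B →ₗ[ℝ] B →ₗ[ℝ] ℝ) (A : Set B) : Prop :=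
  A.Nonempty ∧ ∀ b ∈ A, ∀ c ∈ A, 0 ≤ qQ br (b - c)

/-- `A^π`, the set of points `q`-positively related to `A`. -/
def qPi (br : B →ₗ[ℝ] B →ₗ[ℝ] ℝ) (A : Set B) : Set B :=
  {b : B | ∀ a ∈ A, 0 ≤ qQ br (b - a)}

/-- `A` is maximally `q`-positive. -/
def IsMaxQPositive (br : B →ₗ[ℝ] B →ₗ[ℝ] ℝ) (A : Set B) : Prop :=
  IsQPositive br A ∧ ∀ C : Set B, IsQPositive br C → A ⊆ C → C = A

/-- The generalized Fitzpatrick function `Φ_A(x) = sup_{a ∈ A} (⌊x,a⌋ - q(a))`. -/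
def PhiF (br : B →ₗ[ℝ] B →ₗ[ℝ] ℝ) (A : Set B) (x : B) : EReal :=
  ⨆ a ∈ A, ((br x a - qQ br a : ℝ) : EReal)

/-- The intrinsic conjugate `f^@(b) = sup_{c ∈ B} (⌊c,b⌋ - f(c))`. -/
def intrinsicConj (br : B →ₗ[ℝ] B →ₗ[ℝ] ℝ) (f : B → EReal) (b : B) : EReal :=
  ⨆ c : B, ((br c b : ℝ) : EReal) - f c

/-- `P_q(f) = {b : f(b) = q(b)}`. -/
def PqSet (br : B →ₗ[ℝ] B →ₗ[ℝ] ℝ) (f : B → EReal) : Set B :=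
  {b : B | f b = ((qQ br b : ℝ) : EReal)}

/-- `G_f = {b : f(b) + f^@(b) = ⌊b,b⌋}`. -/
def GSet (br : B →ₗ[ℝ] B →ₗ[ℝ] ℝ) (f : B → EReal) : Set B :=
  {b : B | f b + intrinsicConj br f b = ((br b b : ℝ) : EReal)}

/-- Convexity for `ℝ ∪ {+∞}`-valued functions. -/
def ConvexE (f : B → EReal) : Prop :=
  ∀ x y : B, ∀ α β : ℝ, 0 ≤ α → 0 ≤ β → α + β = 1 →
    f (α • x + β • y) ≤ (α : EReal) * f x + (β : EReal) * f y

/-- The weak topology `w(B,B)` induced by the functionals `⌊·,b⌋`, `b ∈ B`. -/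
def weakTop (br : B →ₗ[ℝ] B →ₗ[ℝ] ℝ) : TopologicalSpace B :=
  ⨅ b : B, TopologicalSpace.induced (fun x => br x b) inferInstance

/-- Lower semicontinuity with respect to the weak topology `w(B,B)`. -/
def LscW (br : B →ₗ[ℝ] B →ₗ[ℝ] ℝ) (f : B → EReal) : Prop :=
  @LowerSemicontinuous B EReal (weakTop br) _ f

/-- `A` is `q`-representable: it has a `w(B,B)`-lsc proper convex `q`-representation. -/
def IsQRepresentable (br : B →ₗ[ℝ] B →ₗ[ℝ] ℝ) (A : Set B) : Prop :=
  ∃ f : B → EReal, LscW br f ∧ ConvexE f ∧ (∃ x, f x ≠ ⊤) ∧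
    (∀ x, ((qQ br x : ℝ) : EReal) ≤ f x) ∧ PqSet br f = A

/-!
Write `Θ = Φ_A^@`. For `q`-positive `A` one has `Φ_A = q` on `A`; hence `Φ_A ≤ Θ`, and either
`q(b) ≤ Φ_A(b) ≤ Θ(b)` or `Θ(b) ≥ ⌊b,b⌋ - Φ_A(b) ≥ q(b)`, while `Θ ≤ q` on `A`. So `Θ` is a
`w(B,B)`-lsc convex proper function `≥ q` with `A ⊆ P_q(Θ)`, and it represents `A` as soon as
`P_q(Θ) ⊆ A`.

Conversely, if `f` represents `A` then `Φ_A ≤ f^@` because `f = q` on `A`, so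
`f ≤ f^@@ ≤ Θ`. The inequality `f ≤ f^@@` is Fenchel–Moreau: `(B, w(B,B))` is locally convex and
its continuous functionals are exactly the `⌊·,d⌋`, so Hahn–Banach applied to the epigraph makes
`f` the supremum of its affine minorants `⌊·,d⌋ + β`. Hence `Θ(b) = q(b)` forces `f(b) = q(b)`.
-/

theorem LowerSemicontinuous.isClosed_realEpigraph {E : Type*} [TopologicalSpace E]
    {f : E → EReal} (hf : LowerSemicontinuous f) : IsClosed {p : E × ℝ | f p.1 ≤ p.2} :=
  hf.isClosed_epigraph.preimage
    (continuous_fst.prodMk (continuous_coe_real_ereal.comp continuous_snd))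

section Epigraph

variable {E : Type*} [AddCommGroup E] [Module ℝ E] {f : E → EReal}

theorem convexE_const (c : EReal) : ConvexE fun _ : E => c := by
  intro x y α β hα hβ hαβ
  induction c using EReal.rec with
  | bot => exact bot_le
  | coe r => rw [← EReal.coe_mul, ← EReal.coe_mul, ← EReal.coe_add, ← add_mul, hαβ, one_mul]
  | top =>
    rcases hα.eq_or_lt with rfl | hα
    · simp [show β = 1 by linarith]
    · rw [EReal.coe_mul_top_of_pos hα, EReal.top_add_of_ne_bot]
      exact ne_bot_of_le_ne_bot EReal.zero_ne_bot (mul_nonneg (by exact_mod_cast hβ) le_top)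

theorem ConvexE.iSup {ι : Sort*} {g : ι → E → EReal} (hg : ∀ i, ConvexE (g i)) :
    ConvexE fun x => ⨆ i, g i x := by
  intro x y α β hα hβ hαβ
  refine iSup_le fun i => (hg i x y α β hα hβ hαβ).trans ?_
  gcongr <;> exact le_iSup (fun i => g i _) i

theorem ConvexE.convex_epigraph (hf : ConvexE f) : Convex ℝ {p : E × ℝ | f p.1 ≤ p.2} := by
  rintro ⟨x, s⟩ hx ⟨y, t⟩ hy α β hα hβ hαβ
  calc f (α • x + β • y) ≤ α * f x + β * f y := hf x y α β hα hβ hαβ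
    _ ≤ α * s + β * t := by gcongr <;> assumption
    _ = ((α • (x, s) + β • (y, t)).2 : ℝ) := by simp

variable [TopologicalSpace E]

theorem le_of_separation {ψ : E →L[ℝ] ℝ} {c u : ℝ} (hc : 0 < c)
    (hsep : ∀ x (s : ℝ), f x ≤ s → u < ψ x + s * c) (x : E) : ↑((u - ψ x) / c) ≤ f x := by
  refine not_lt.1 fun h => ?_
  obtain ⟨s, hfs, hs⟩ := EReal.lt_iff_exists_real_btwn.1 h
  have := hsep x s hfs.le
  rw [EReal.coe_lt_coe_iff, lt_div_iff₀ hc] at hs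
  linarith

theorem exists_affine_le_of_separation {ψ : E →L[ℝ] ℝ} {c u : ℝ} (hc : 0 < c)
    (hsep : ∀ x (s : ℝ), f x ≤ s → u < ψ x + s * c) :
    ∃ (φ : E →L[ℝ] ℝ) (β : ℝ), (∀ x, ↑(φ x + β) ≤ f x) ∧ ∀ x, φ x + β = (u - ψ x) / c := by
  have heq (x : E) : (-c⁻¹ • ψ) x + u / c = (u - ψ x) / c := by
    simp only [smul_apply, smul_eq_mul]
    field_simp
    ring
  exact ⟨-c⁻¹ • ψ, u / c, fun x => heq x ▸ le_of_separation hc hsep x, heq⟩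

theorem nonneg_of_separation {ψ : E →L[ℝ] ℝ} {c u : ℝ}
    (hsep : ∀ x (s : ℝ), f x ≤ s → u < ψ x + s * c) {x₀ : E} (hx₀ : f x₀ ≠ ⊤) : 0 ≤ c := by
  by_contra! hc
  set s := max (f x₀).toReal ((u - ψ x₀) / c)
  have hs := hsep x₀ s ((EReal.le_coe_toReal hx₀).trans (EReal.coe_le_coe_iff.2 (le_max_left ..)))
  have := (div_le_iff_of_neg hc).1 (le_max_right ((f x₀).toReal) ((u - ψ x₀) / c))
  linarith

theorem exists_affine_le_of_vertical_separation {φ₀ ψ : E →L[ℝ] ℝ} {β₀ u : ℝ}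
    (hφ₀ : ∀ x, ↑(φ₀ x + β₀) ≤ f x) (hsep : ∀ x (s : ℝ), f x ≤ s → u < ψ x)
    {z : E} (hz : ψ z < u) (t : ℝ) :
    ∃ (φ : E →L[ℝ] ℝ) (β : ℝ), (∀ x, ↑(φ x + β) ≤ f x) ∧ t < φ z + β := by
  -- tilt the minorant by `l • (u - ψ)`, which is `≤ 0` on the domain of `f` and large at `z`
  set l := (|t - (φ₀ z + β₀)| + 1) / (u - ψ z)
  have hl : 0 ≤ l := div_nonneg (by positivity) (sub_nonneg.2 hz.le)
  have hlz : l * (u - ψ z) = |t - (φ₀ z + β₀)| + 1 := div_mul_cancel₀ _ (sub_pos.2 hz).ne'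
  have heq (x : E) : (φ₀ - l • ψ) x + (β₀ + l * u) = φ₀ x + β₀ + l * (u - ψ x) := by
    simp only [sub_apply, smul_apply, smul_eq_mul]
    ring
  refine ⟨φ₀ - l • ψ, β₀ + l * u, fun x => not_lt.1 fun h => ?_, ?_⟩
  · obtain ⟨s, hfs, hs⟩ := EReal.lt_iff_exists_real_btwn.1 h
    have hψ := hsep x s hfs.le
    have h₀ := EReal.coe_le_coe_iff.1 ((hφ₀ x).trans hfs.le)
    rw [EReal.coe_lt_coe_iff, heq] at hs
    nlinarith
  · rw [heq, hlz]
    linarith [le_abs_self (t - (φ₀ z + β₀))]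

variable [IsTopologicalAddGroup E] [ContinuousSMul ℝ E] [LocallyConvexSpace ℝ E]

theorem ConvexE.exists_separation_of_lt (hconv : ConvexE f) (hlsc : LowerSemicontinuous f)
    {z : E} {t : ℝ} (ht : ↑t < f z) :
    ∃ (ψ : E →L[ℝ] ℝ) (c u : ℝ), ψ z + t * c < u ∧ ∀ x (s : ℝ), f x ≤ s → u < ψ x + s * c := by
  obtain ⟨L, u, hz, hS⟩ := geometric_hahn_banach_point_closed hconv.convex_epigraph
    hlsc.isClosed_realEpigraph (show (z, t) ∉ {p : E × ℝ | f p.1 ≤ p.2} from not_le.2 ht)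
  have hL (x : E) (s : ℝ) : L (x, s) = L.comp (.inl ℝ E ℝ) x + s * L (0, 1) := by
    rw [← smul_eq_mul, ← map_smul, ContinuousLinearMap.comp_apply, ContinuousLinearMap.inl_apply,
      ← map_add]
    simp
  exact ⟨L.comp (.inl ℝ E ℝ), L (0, 1), u, hL z t ▸ hz, fun x s hxs => hL x s ▸ hS (x, s) hxs⟩

theorem ConvexE.exists_affine_le (hconv : ConvexE f) (hlsc : LowerSemicontinuous f) {x₀ : E}
    (hx₀ : f x₀ ≠ ⊤) (hx₀' : f x₀ ≠ ⊥) :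
    ∃ (φ : E →L[ℝ] ℝ) (β : ℝ), ∀ x, ↑(φ x + β) ≤ f x := by
  set s₀ := (f x₀).toReal
  obtain ⟨ψ, c, u, hlt, hsep⟩ := hconv.exists_separation_of_lt hlsc
    (t := s₀ - 1) (EReal.coe_lt_coe_iff.2 (sub_one_lt s₀) |>.trans_le (EReal.coe_toReal hx₀ hx₀').le)
  have hc : 0 < c := by nlinarith [hsep x₀ s₀ (EReal.le_coe_toReal hx₀)]
  obtain ⟨φ, β, hφ, -⟩ := exists_affine_le_of_separation hc hsep
  exact ⟨φ, β, hφ⟩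

theorem ConvexE.exists_affine_le_of_lt (hconv : ConvexE f) (hlsc : LowerSemicontinuous f)
    (hbot : ∀ x, f x ≠ ⊥) (hdom : ∃ x, f x ≠ ⊤) {z : E} {t : ℝ} (ht : ↑t < f z) :
    ∃ (φ : E →L[ℝ] ℝ) (β : ℝ), (∀ x, ↑(φ x + β) ≤ f x) ∧ t < φ z + β := by
  obtain ⟨x₀, hx₀⟩ := hdom
  obtain ⟨ψ, c, u, hz, hsep⟩ := hconv.exists_separation_of_lt hlsc ht
  rcases lt_trichotomy c 0 with hc | rfl | hc
  · exact absurd (nonneg_of_separation hsep hx₀) hc.not_ge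
  · obtain ⟨φ₀, β₀, hφ₀⟩ := hconv.exists_affine_le hlsc hx₀ (hbot x₀)
    simp only [mul_zero, add_zero] at hz hsep
    exact exists_affine_le_of_vertical_separation hφ₀ hsep hz t
  · obtain ⟨φ, β, hφ, heq⟩ := exists_affine_le_of_separation hc hsep
    refine ⟨φ, β, hφ, ?_⟩
    rw [heq, lt_div_iff₀ hc]
    linarith

end Epigraph

section WeakBilin

variable {E F : Type*} [AddCommGroup E] [Module ℝ E] [AddCommGroup F] [Module ℝ F]
  (br : E →ₗ[ℝ] F →ₗ[ℝ] ℝ)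

theorem WeakBilin.topologicalSpace_eq_iInf :
    (WeakBilin.instTopologicalSpace br : TopologicalSpace (WeakBilin br)) =
      ⨅ y, TopologicalSpace.induced (fun x => br x y) inferInstance := by
  rw [WeakBilin.instTopologicalSpace, Pi.topologicalSpace, induced_iInf]
  simp only [induced_compose]
  rfl

theorem WeakBilin.exists_eq_apply (φ : WeakBilin br →L[ℝ] ℝ) : ∃ y, ∀ x, φ x = br x y := by
  let l : E →ₗ[ℝ] ℝ := φ.toLinearMap
  have hl : l ∈ Submodule.span ℝ (Set.range br.flip) := by
    rw [LinearMap.mem_span_iff_continuous]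
    change @Continuous E ℝ (⨅ y, TopologicalSpace.induced (fun x => br x y) _) _ l
    rw [← WeakBilin.topologicalSpace_eq_iInf]
    exact φ.continuous
  obtain ⟨y, hy⟩ := Submodule.span_le.2
    (Set.range_subset_iff.2 fun y => LinearMap.mem_range_self br.flip y) hl
  exact ⟨y, fun x => (LinearMap.congr_fun hy x).symm⟩

end WeakBilin

section SSD

variable (br : B →ₗ[ℝ] B →ₗ[ℝ] ℝ)

theorem LscW.lowerSemicontinuous {f : B → EReal} (hf : LscW br f) :
    LowerSemicontinuous (show WeakBilin br → EReal from f) := by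
  unfold LscW weakTop at hf
  rwa [← WeakBilin.topologicalSpace_eq_iInf] at hf

theorem continuous_weakTop_apply (hsym : ∀ x y : B, br x y = br y x) (c : B) :
    @Continuous B ℝ (weakTop br) _ fun x => br c x := by
  simp_rw [hsym c]
  exact continuous_iInf_dom continuous_induced_dom

theorem qQ_sub (hsym : ∀ x y : B, br x y = br y x) (x y : B) :
    qQ br (x - y) = qQ br x - br x y + qQ br y := by
  simp only [qQ, map_sub, LinearMap.sub_apply, hsym y x]
  ring

theorem le_PhiF {A : Set B} {a : B} (ha : a ∈ A) (x : B) : ↑(br x a - qQ br a) ≤ PhiF br A x :=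
  le_iSup₂_of_le (f := fun a (_ : a ∈ A) => ((br x a - qQ br a : ℝ) : EReal)) a ha le_rfl

theorem PhiF_eq_qQ_of_mem (hsym : ∀ x y : B, br x y = br y x) {A : Set B}
    (hpos : ∀ b ∈ A, ∀ c ∈ A, 0 ≤ qQ br (b - c)) {a : B} (ha : a ∈ A) :
    PhiF br A a = qQ br a := by
  refine le_antisymm (iSup₂_le fun c hc => EReal.coe_le_coe_iff.2 ?_) ?_
  · linarith [qQ_sub br hsym a c ▸ hpos a ha c hc]
  · convert le_PhiF br ha a using 2
    simp only [qQ]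
    ring

theorem le_intrinsicConj (f : B → EReal) (c b : B) : ↑(br c b) - f c ≤ intrinsicConj br f b :=
  le_iSup (fun c => ((br c b : ℝ) : EReal) - f c) c

theorem intrinsicConj_antitone : Antitone (intrinsicConj br) :=
  fun _ _ hfg _ => iSup_mono fun c => EReal.sub_le_sub le_rfl (hfg c)

theorem intrinsicConj_le_of_affine_le {f : B → EReal} {d : B} {β : ℝ}
    (h : ∀ x, ↑(br x d + β) ≤ f x) : intrinsicConj br f d ≤ ↑(-β) :=
  iSup_le fun c => (EReal.sub_le_sub le_rfl (h c)).trans_eq (by rw [← EReal.coe_sub]; ring_nf)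

theorem PhiF_le_intrinsicConj (hsym : ∀ x y : B, br x y = br y x) {A : Set B} {f : B → EReal}
    (hf : ∀ a ∈ A, f a = qQ br a) : PhiF br A ≤ intrinsicConj br f :=
  fun x => iSup₂_le fun a ha => by
    rw [EReal.coe_sub, hsym, ← hf a ha]
    exact le_intrinsicConj br f a x

theorem lscW_intrinsicConj (hsym : ∀ x y : B, br x y = br y x) (f : B → EReal) :
    LscW br (intrinsicConj br f) := by
  let _ := weakTop br
  refine lowerSemicontinuous_iSup fun c => ?_
  induction f c using EReal.rec with
  | bot => simpa using lowerSemicontinuous_const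
  | top => simpa using lowerSemicontinuous_const
  | coe r =>
    simp_rw [← EReal.coe_sub]
    exact (continuous_coe_real_ereal.comp
      ((continuous_weakTop_apply br hsym c).sub continuous_const)).lowerSemicontinuous

theorem convexE_intrinsicConj (f : B → EReal) : ConvexE (intrinsicConj br f) := by
  refine ConvexE.iSup (g := fun c b => ↑(br c b) - f c) fun c => ?_
  induction f c using EReal.rec with
  | bot => simpa using convexE_const ⊤
  | top => simpa using convexE_const ⊥
  | coe r =>
    intro x y α β hα hβ hαβ
    simp only [← EReal.coe_sub, ← EReal.coe_mul, ← EReal.coe_add, map_add, map_smul, smul_eq_mul]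
    exact EReal.coe_le_coe_iff.2 (le_of_eq (by linear_combination r * hαβ))

theorem le_intrinsicConj_intrinsicConj (hsym : ∀ x y : B, br x y = br y x) {f : B → EReal}
    (hlsc : LscW br f) (hconv : ConvexE f) (hbot : ∀ x, f x ≠ ⊥) (hdom : ∃ x, f x ≠ ⊤) :
    f ≤ intrinsicConj br (intrinsicConj br f) := by
  intro z
  refine le_of_forall_lt fun s hs => ?_
  obtain ⟨t, hst, htz⟩ := EReal.lt_iff_exists_real_btwn.1 hs
  obtain ⟨φ, β, hφ, hφz⟩ := ConvexE.exists_affine_le_of_lt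
    (show ConvexE (B := WeakBilin br) f from hconv) (hlsc.lowerSemicontinuous br) hbot hdom htz
  obtain ⟨d, hd⟩ := WeakBilin.exists_eq_apply br φ
  simp only [hd] at hφ
  calc s < t := hst
    _ < ↑(br z d + β) := EReal.coe_lt_coe_iff.2 (hd z ▸ hφz)
    _ = ↑(br d z) - ↑(-β) := by rw [← EReal.coe_sub, hsym]; ring_nf
    _ ≤ ↑(br d z) - intrinsicConj br f d :=
      EReal.sub_le_sub le_rfl (intrinsicConj_le_of_affine_le br hφ)
    _ ≤ _ := le_intrinsicConj br _ d z

theorem qQ_le_intrinsicConj_PhiF (hsym : ∀ x y : B, br x y = br y x) {A : Set B}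
    (hpos : ∀ b ∈ A, ∀ c ∈ A, 0 ≤ qQ br (b - c)) (b : B) :
    ↑(qQ br b) ≤ intrinsicConj br (PhiF br A) b := by
  rcases le_or_gt ↑(qQ br b) (PhiF br A b) with h | h
  · exact h.trans (PhiF_le_intrinsicConj br hsym (fun _ => PhiF_eq_qQ_of_mem br hsym hpos) b)
  · calc ↑(qQ br b) = ↑(br b b) - ↑(qQ br b) := by rw [← EReal.coe_sub]; simp only [qQ]; ring_nf
      _ ≤ ↑(br b b) - PhiF br A b := EReal.sub_le_sub le_rfl h.le
      _ ≤ _ := le_intrinsicConj br _ b b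

theorem intrinsicConj_PhiF_eq_qQ_of_mem (hsym : ∀ x y : B, br x y = br y x) {A : Set B}
    (hpos : ∀ b ∈ A, ∀ c ∈ A, 0 ≤ qQ br (b - c)) {a : B} (ha : a ∈ A) :
    intrinsicConj br (PhiF br A) a = qQ br a := by
  refine le_antisymm ?_ (qQ_le_intrinsicConj_PhiF br hsym hpos a)
  simpa using intrinsicConj_le_of_affine_le br (β := -qQ br a) fun x => le_PhiF br ha x

end SSD

theorem stmt2_general (br : B →ₗ[ℝ] B →ₗ[ℝ] ℝ)
    (hsym : ∀ x y : B, br x y = br y x)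
    (A : Set B) (hA : IsQPositive br A) :
    IsQRepresentable br A ↔ PqSet br (intrinsicConj br (PhiF br A)) ⊆ A := by
  obtain ⟨⟨a₀, ha₀⟩, hpos⟩ := hA
  constructor
  · rintro ⟨f, hlsc, hconv, hdom, hge, rfl⟩ b hb
    have hbot (x : B) : f x ≠ ⊥ := ne_bot_of_le_ne_bot (EReal.coe_ne_bot _) (hge x)
    have hfb : f b ≤ intrinsicConj br (PhiF br (PqSet br f)) b :=
      le_intrinsicConj_intrinsicConj br hsym hlsc hconv hbot hdom b |>.trans
        (intrinsicConj_antitone br (PhiF_le_intrinsicConj br hsym fun _ ha => ha) b)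
    exact le_antisymm (hb ▸ hfb) (hge b)
  · intro hsub
    have hA : A ⊆ PqSet br (intrinsicConj br (PhiF br A)) := fun _ ha =>
      intrinsicConj_PhiF_eq_qQ_of_mem br hsym hpos ha
    refine ⟨_, lscW_intrinsicConj br hsym _, convexE_intrinsicConj br _, ⟨a₀, ?_⟩,
      qQ_le_intrinsicConj_PhiF br hsym hpos, hsub.antisymm hA⟩
    rw [hA ha₀]
    exact EReal.coe_ne_top _

/-- A is q-representable iff P_q(Φ_A^@) ⊆ A. -/
theorem stmt2 [Nontrivial B] (br : B →ₗ[ℝ] B →ₗ[ℝ] ℝ)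
    (hsym : ∀ x y : B, br x y = br y x)
    (A : Set B) (hA : IsQPositive br A) :
    IsQRepresentable br A ↔ PqSet br (intrinsicConj br (PhiF br A)) ⊆ A :=
  stmt2_general br hsym A hA
end
end

section
/- Let A be a q-positive subset of an SSD space B. If there exist two distinct maximally q-positive sets containing A, then there exists an injective map from the real interval [0,1] into the family of maximally q-positive sets containing A; in particular A has at least continuum many maximally q-positive extensions. -/
noncomputable section

variable {B : Type*} [AddCommGroup B] [Module ℝ B]

/-!
Take `b ∈ M₁ \ M₂`. By maximality of `M₂`, some `c ∈ M₂` has `q(b - c) < 0`. Put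
`P t = (1 - t) c + t b`. Since `q((1 - t) x + t y) = (1 - t) q(x) + t q(y) - t (1 - t) q(y - x)`
and `q(b - c) < 0`, every `P t` with `t ∈ [0, 1]` is `q`-positively related to `A`, while
`q(P t - P s) = (t - s)² q(b - c) < 0` for `t ≠ s`. Extending each `A ∪ {P t}` to a maximally
`q`-positive set by Zorn's lemma therefore gives pairwise distinct extensions of `A`.
-/

open AffineMap

section

variable (br : B →ₗ[ℝ] B →ₗ[ℝ] ℝ)

lemma qQ_neg (x : B) : qQ br (-x) = qQ br x := by
  simp [qQ]

lemma qQ_smul (t : ℝ) (x : B) : qQ br (t • x) = t ^ 2 * qQ br x := by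
  simp only [qQ, map_smul, LinearMap.smul_apply, smul_eq_mul]
  ring

lemma qQ_lineMap (hsym : ∀ x y : B, br x y = br y x) (x y : B) (t : ℝ) :
    qQ br (lineMap x y t) = (1 - t) * qQ br x + t * qQ br y - t * (1 - t) * qQ br (y - x) := by
  simp only [lineMap_apply_module, qQ, map_add, map_smul, map_sub, LinearMap.add_apply,
    LinearMap.smul_apply, LinearMap.sub_apply, smul_eq_mul]
  rw [hsym y x]
  ring

lemma qQ_lineMap_sub_lineMap (x y : B) (t s : ℝ) :
    qQ br (lineMap x y t - lineMap x y s) = (t - s) ^ 2 * qQ br (y - x) := by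
  rw [← qQ_smul]
  congr 1
  simp only [lineMap_apply_module]
  module

variable {br}

lemma IsQPositive.subset_qPi {A M : Set B} (hM : IsQPositive br M) (hAM : A ⊆ M) :
    M ⊆ qPi br A :=
  fun _ hb a ha => hM.2 _ hb a (hAM ha)

lemma IsQPositive.insert {A : Set B} {x : B} (hA : IsQPositive br A) (hx : x ∈ qPi br A) :
    IsQPositive br (insert x A) := by
  refine ⟨Set.insert_nonempty x A, ?_⟩
  rintro b (rfl | hb) c (rfl | hc)
  · simp [qQ]
  · exact hx c hc
  · rw [← neg_sub, qQ_neg]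
    exact hx b hb
  · exact hA.2 b hb c hc

lemma IsMaxQPositive.qPi_subset {M : Set B} (hM : IsMaxQPositive br M) : qPi br M ⊆ M := by
  intro x hx
  rw [← hM.2 _ (hM.1.insert hx) (Set.subset_insert x M)]
  exact Set.mem_insert x M

lemma IsMaxQPositive.exists_qQ_sub_neg {M : Set B} (hM : IsMaxQPositive br M) {b : B}
    (hb : b ∉ M) : ∃ c ∈ M, qQ br (b - c) < 0 := by
  simpa [qPi] using fun h => hb (hM.qPi_subset h)

lemma exists_isMaxQPositive_superset {C : Set B} (hC : IsQPositive br C) :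
    ∃ M, C ⊆ M ∧ IsMaxQPositive br M := by
  have chain_ub : ∀ c ⊆ {D : Set B | IsQPositive br D}, IsChain (· ⊆ ·) c → c.Nonempty →
      ∃ ub ∈ {D : Set B | IsQPositive br D}, ∀ s ∈ c, s ⊆ ub := by
    intro c hc hchain ⟨D, hD⟩
    refine ⟨⋃₀ c, ⟨(hc hD).1.mono (Set.subset_sUnion_of_mem hD), ?_⟩,
      fun s hs => Set.subset_sUnion_of_mem hs⟩
    rintro x ⟨D₁, hD₁, hx⟩ y ⟨D₂, hD₂, hy⟩
    rcases hchain.total hD₁ hD₂ with h | h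
    · exact (hc hD₂).2 x (h hx) y hy
    · exact (hc hD₁).2 x hx y (h hy)
  obtain ⟨M, hCM, hmax⟩ := zorn_subset_nonempty {D : Set B | IsQPositive br D} chain_ub C hC
  exact ⟨M, hCM, hmax.1, fun D hD hMD => le_antisymm (hmax.2 hD hMD) hMD⟩

lemma lineMap_mem_qPi (hsym : ∀ x y : B, br x y = br y x) {A : Set B} {b c : B}
    (hb : b ∈ qPi br A) (hc : c ∈ qPi br A) (hbc : qQ br (b - c) ≤ 0) {t : ℝ}
    (ht : t ∈ Set.Icc (0 : ℝ) 1) : lineMap c b t ∈ qPi br A := by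
  intro a ha
  have hshift : lineMap c b t - a = lineMap (c - a) (b - a) t := by
    simp only [lineMap_apply_module]
    module
  rw [hshift, qQ_lineMap br hsym, sub_sub_sub_cancel_right]
  have hweight := mul_nonneg ht.1 (sub_nonneg.2 ht.2)
  nlinarith [mul_nonneg (sub_nonneg.2 ht.2) (hc a ha), mul_nonneg ht.1 (hb a ha),
    mul_nonpos_of_nonneg_of_nonpos hweight hbc]

lemma IsQPositive.eq_of_lineMap_mem {C : Set B} (hC : IsQPositive br C) {b c : B}
    (hbc : qQ br (b - c) < 0) {t s : ℝ} (ht : lineMap c b t ∈ C) (hs : lineMap c b s ∈ C) :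
    t = s := by
  have hq := hC.2 _ ht _ hs
  rw [qQ_lineMap_sub_lineMap] at hq
  have hsq : (t - s) ^ 2 = 0 := by nlinarith [sq_nonneg (t - s)]
  exact sub_eq_zero.1 (pow_eq_zero_iff two_ne_zero |>.1 hsq)

end

theorem stmt15_general (br : B →ₗ[ℝ] B →ₗ[ℝ] ℝ)
    (hsym : ∀ x y : B, br x y = br y x)
    (A : Set B) (hA : IsQPositive br A)
    (M₁ M₂ : Set B) (hM₁ : IsMaxQPositive br M₁) (hAM₁ : A ⊆ M₁)
    (hM₂ : IsMaxQPositive br M₂) (hAM₂ : A ⊆ M₂) (hne : M₁ ≠ M₂) :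
    ∃ g : Set.Icc (0 : ℝ) 1 → Set B, Function.Injective g ∧
      ∀ t : Set.Icc (0 : ℝ) 1, IsMaxQPositive br (g t) ∧ A ⊆ g t := by
  obtain ⟨b, hbM₁, hbM₂⟩ : ∃ b ∈ M₁, b ∉ M₂ :=
    Set.not_subset.1 fun h => hne (hM₁.2 M₂ hM₂.1 h).symm
  obtain ⟨c, hcM₂, hbc⟩ := hM₂.exists_qQ_sub_neg hbM₂
  have hP : ∀ t : Set.Icc (0 : ℝ) 1, lineMap c b (t : ℝ) ∈ qPi br A := fun t =>
    lineMap_mem_qPi hsym (hM₁.1.subset_qPi hAM₁ hbM₁) (hM₂.1.subset_qPi hAM₂ hcM₂) hbc.le t.2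
  choose M hPM hM using fun t => exists_isMaxQPositive_superset (hA.insert (hP t))
  refine ⟨M, fun t s hts => Subtype.ext ?_,
    fun t => ⟨hM t, (Set.subset_insert _ _).trans (hPM t)⟩⟩
  exact (hM s).1.eq_of_lineMap_mem hbc (hts ▸ hPM t (Set.mem_insert _ _))
    (hPM s (Set.mem_insert _ _))

/-- If a q-positive set has two distinct maximally q-positive
extensions, then it has continuum many. -/
theorem stmt15 [Nontrivial B] (br : B →ₗ[ℝ] B →ₗ[ℝ] ℝ)
    (hsym : ∀ x y : B, br x y = br y x)
    (A : Set B) (hA : IsQPositive br A)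
    (M₁ M₂ : Set B) (hM₁ : IsMaxQPositive br M₁) (hAM₁ : A ⊆ M₁)
    (hM₂ : IsMaxQPositive br M₂) (hAM₂ : A ⊆ M₂) (hne : M₁ ≠ M₂) :
    ∃ g : Set.Icc (0 : ℝ) 1 → Set B, Function.Injective g ∧
      ∀ t : Set.Icc (0 : ℝ) 1, IsMaxQPositive br (g t) ∧ A ⊆ g t :=
  stmt15_general br hsym A hA M₁ M₂ hM₁ hAM₁ hM₂ hAM₂ hne
end
end
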